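/- arXiv:math/0409401 — 3 statements merged into one kernel-verified Lean document; each statement's English description precedes it below -/
import Mathlib

section
/- Let q = p^s with p an odd prime and s ≥ 1, and let g be a primitive element of F_{q^2}. Then the set of elements x in F_{q^2} with tr_{q^2/q}(x) = 0 equals {0} ∪ {g^{(q+1)/2 + (q+1)i} : 0 ≤ i < q-1}. -/
/-- For `q = p^s`, `p` an odd prime, `s ≥ 1`, `F` the finite field with
`q^2` elements and `g` a primitive element of `F`, the kernel of the relative trace
`x ↦ x + x^q` equals `{0} ∪ {g^{(q+1)/2 + (q+1)i} : 0 ≤ i < q-1}`. -/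
theorem trace_zero_set_odd_char (p s : ℕ) (hp : p.Prime) (hp2 : p ≠ 2) (hs : 1 ≤ s)
    (q : ℕ) (hq : q = p ^ s)
    (F : Type) [Field F] [Fintype F] (hF : Fintype.card F = q ^ 2)
    (g : F) (hg : ∀ x : F, x ≠ 0 → ∃ k : ℕ, g ^ k = x) :
    {x : F | x + x ^ q = 0} =
      {0} ∪ {y : F | ∃ i : ℕ, i < q - 1 ∧ y = g ^ ((q + 1) / 2 + (q + 1) * i)} := by
  classical
  -- basic numerics
  have hp3 : 3 ≤ p := by
    have := hp.two_le; omega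
  have hq3 : 3 ≤ q := by
    calc 3 ≤ p := hp3
    _ ≤ p ^ s := Nat.le_self_pow (by omega) p
    _ = q := hq.symm
  have hqodd : Odd q := by
    rw [hq]; exact (hp.odd_of_ne_two hp2).pow
  obtain ⟨t, ht⟩ := hqodd   -- q = 2*t + 1
  have ht1 : 1 ≤ t := by omega
  have hn : q ^ 2 - 1 = 2 * t * (2 * t + 2) := by
    have h2 : q ^ 2 = 2 * t * (2 * t + 2) + 1 := by rw [ht]; ring
    omega
  have hnpos : 0 < q ^ 2 - 1 := by rw [hn]; positivity
  -- g is nonzero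
  have hg0 : g ≠ 0 := by
    intro h0
    have hcard : 2 < Fintype.card F := by
      rw [hF]; nlinarith
    have hns : ¬ (Finset.univ : Finset F) ⊆ {0, 1} := by
      intro hsub
      have h1 := Finset.card_le_card hsub
      have h2 : ({0, 1} : Finset F).card ≤ 2 :=
        (Finset.card_insert_le _ _).trans (by simp)
      rw [Finset.card_univ] at h1
      omega
    obtain ⟨x, -, hx⟩ := Finset.not_subset.mp hns
    simp only [Finset.mem_insert, Finset.mem_singleton, not_or] at hx
    obtain ⟨k, hk⟩ := hg x hx.1
    rcases k with _ | k
    · simp only [pow_zero] at hk; exact hx.2 hk.symm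
    · rw [h0, zero_pow (Nat.succ_ne_zero k)] at hk; exact hx.1 hk.symm
  -- the order of g is q^2 - 1
  have hord_dvd : orderOf g ∣ q ^ 2 - 1 := by
    apply orderOf_dvd_of_pow_eq_one
    have := FiniteField.pow_card_sub_one_eq_one g hg0
    rwa [hF] at this
  have hordpos : 0 < orderOf g := by
    rcases Nat.eq_zero_or_pos (orderOf g) with h | h
    · rw [h] at hord_dvd
      exact absurd (Nat.zero_dvd.mp hord_dvd) (by omega)
    · exact h
  set u : Fˣ := Units.mk0 g hg0 with hu
  have huval : (u : F) = g := rfl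
  have hordu : orderOf u = orderOf g := by rw [← orderOf_units, huval]
  have hord_ge : q ^ 2 - 1 ≤ orderOf g := by
    have hsurj : Function.Surjective (fun k : Fin (orderOf u) => u ^ (k : ℕ)) := by
      rintro x
      obtain ⟨k, hk⟩ := hg (x : F) x.ne_zero
      refine ⟨⟨k % orderOf u, Nat.mod_lt _ (by omega)⟩, ?_⟩
      apply Units.ext
      simp only [Units.val_pow_eq_pow_val, huval]
      rw [hordu, pow_mod_orderOf, hk]
    have hle := Nat.card_le_card_of_surjective _ hsurj
    have h1 : Nat.card (Fin (orderOf u)) = orderOf u := by simp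
    have h2 : Nat.card Fˣ = q ^ 2 - 1 := by
      rw [Nat.card_units, Nat.card_eq_fintype_card, hF]
    rw [h1, h2, hordu] at hle
    exact hle
  have hord : orderOf g = q ^ 2 - 1 :=
    le_antisymm (Nat.le_of_dvd hnpos hord_dvd) hord_ge
  -- g ^ ((q^2-1)/2) = -1
  have hm : g ^ (2 * t * (t + 1)) = -1 := by
    have h1 : g ^ (2 * t * (t + 1)) * g ^ (2 * t * (t + 1)) = 1 := by
      rw [← pow_add]
      have he : 2 * t * (t + 1) + 2 * t * (t + 1) = q ^ 2 - 1 := by rw [hn]; ring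
      rw [he, ← hord, pow_orderOf_eq_one]
    have h2 : g ^ (2 * t * (t + 1)) ≠ 1 := by
      intro h
      have hd := orderOf_dvd_of_pow_eq_one h
      rw [hord, hn] at hd
      have := Nat.le_of_dvd (by positivity) hd
      nlinarith
    rcases mul_self_eq_one_iff.mp h1 with h | h
    · exact absurd h h2
    · exact h
  -- exponent arithmetic facts
  have hhalf : (q + 1) / 2 = t + 1 := by omega
  have hq1 : q + 1 = 2 * t + 2 := by omega
  have hqm1 : q - 1 = 2 * t := by omega
  have hqsplit : q = 1 + (q - 1) := by omega
  have key : ∀ z : F, z ^ q = z * z ^ (q - 1) := by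
    intro z
    conv_lhs => rw [show q = q - 1 + 1 by omega]
    rw [pow_succ']
  ext x
  simp only [Set.mem_setOf_eq, Set.mem_union, Set.mem_singleton_iff]
  constructor
  · intro hx
    by_cases hx0 : x = 0
    · exact Or.inl hx0
    · right
      obtain ⟨k, hk⟩ := hg x hx0
      -- x ^ (q-1) = -1
      have hx1 : x ^ (q - 1) = -1 := by
        have : x * (1 + x ^ (q - 1)) = 0 := by
          rw [mul_add, mul_one, ← key]
          exact hx
        rcases mul_eq_zero.mp this with h | h
        · exact absurd h hx0
        · linear_combination h
      -- so g ^ (k * (q-1)) = g ^ (2t(t+1))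
      have hgg : g ^ (k * (q - 1)) = g ^ (2 * t * (t + 1)) := by
        rw [pow_mul, hk, hx1, hm]
      have hmod : k * (q - 1) ≡ 2 * t * (t + 1) [MOD q ^ 2 - 1] := by
        have : u ^ (k * (q - 1)) = u ^ (2 * t * (t + 1)) := by
          apply Units.ext
          simpa only [Units.val_pow_eq_pow_val, huval] using hgg
        rw [pow_eq_pow_iff_modEq, hordu, hord] at this
        exact this
      -- cancel (q-1) = 2t
      have hmod2 : k ≡ t + 1 [MOD 2 * t + 2] := by
        apply Nat.ModEq.mul_left_cancel' (c := 2 * t) (by omega)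
        have e1 : 2 * t * k = k * (q - 1) := by rw [hqm1]; ring
        have e2 : 2 * t * (2 * t + 2) = q ^ 2 - 1 := hn.symm
        rw [e1, e2]
        exact hmod
      -- reduce k mod q^2-1
      set k' : ℕ := k % (q ^ 2 - 1) with hk'
      have hgk' : g ^ k' = x := by rw [hk', ← hord, pow_mod_orderOf, hk]
      have hk'lt : k' < q ^ 2 - 1 := Nat.mod_lt _ hnpos
      have hmod3 : k' ≡ t + 1 [MOD 2 * t + 2] := by
        have h1 : k' ≡ k [MOD q ^ 2 - 1] := Nat.mod_modEq k (q ^ 2 - 1)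
        have h2 : (2 * t + 2) ∣ q ^ 2 - 1 := ⟨2 * t, by rw [hn]; ring⟩
        exact (h1.of_dvd h2).trans hmod2
      have hrem : k' % (2 * t + 2) = t + 1 := by
        have h := hmod3
        unfold Nat.ModEq at h
        rwa [Nat.mod_eq_of_lt (by omega : t + 1 < 2 * t + 2)] at h
      refine ⟨k' / (2 * t + 2), ?_, ?_⟩
      · have hb : k' / (2 * t + 2) < 2 * t := by
          rw [Nat.div_lt_iff_lt_mul (by omega : 0 < 2 * t + 2)]
          rw [hn] at hk'lt
          exact hk'lt
        rw [hqm1]; exact hb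
      · rw [hhalf, hq1, hgk'.symm]
        congr 1
        have hdm := Nat.div_add_mod k' (2 * t + 2)
        rw [hrem] at hdm
        exact hdm.symm.trans (add_comm _ _)
  · rintro (rfl | ⟨i, hi, rfl⟩)
    · rw [zero_pow (by omega), add_zero]
    · set y : F := g ^ ((q + 1) / 2 + (q + 1) * i) with hy
      have hy1 : y ^ (q - 1) = -1 := by
        rw [hy, ← pow_mul, hhalf, hq1, hqm1,
          show ((t + 1) + (2 * t + 2) * i) * (2 * t)
            = 2 * t * (t + 1) + (q ^ 2 - 1) * i by rw [hn]; ring,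
          pow_add, hm, pow_mul, ← hord, pow_orderOf_eq_one, one_pow, mul_one]
      calc y + y ^ q = y * (1 + y ^ (q - 1)) := by
            rw [mul_add, mul_one, ← key]
      _ = 0 := by rw [hy1]; ring
end

section
/- Let ℓ ≥ 2, V = F_4^{2ℓ}, Q the elliptic form αx₁² + x₁x₂ + x₂² + x₃x₄ + ⋯ + x_{2ℓ-1}x_{2ℓ}, and D₁ = {v : Q(v) = 1}. Let O₀ = {(x₁,…,x_{2ℓ}) ∈ D₁ : x₁ = 0}. Then for any additive character χ of F_4^{2ℓ} of the form χ_{w₁,…,w_{2ℓ}}(x) = (-1)^{tr(w₁x₁ + ⋯ + w_{2ℓ}x_{2ℓ})} with w₂ ≠ 0, the character sum χ(O₀) equals 4^{ℓ-1} or -4^{ℓ-1}. -/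
attribute [local instance] Classical.propDecidable

/-- The `k`-th entry of a vector, or `0` if `k` is out of range. -/
def ent {F : Type} [Zero F] {n : ℕ} (v : Fin n → F) (k : ℕ) : F :=
  if h : k < n then v ⟨k, h⟩ else 0

/-- The elliptic quadratic form
`Q(x₁,…,x_{2ℓ}) = αx₁² + x₁x₂ + x₂² + x₃x₄ + ⋯ + x_{2ℓ-1}x_{2ℓ}` on `F₄^{2ℓ}`. -/
def Qell {F : Type} [Field F] (α : F) (ℓ : ℕ) (v : Fin (2 * ℓ) → F) : F :=
  α * ent v 0 ^ 2 + ent v 0 * ent v 1 + ent v 1 ^ 2 +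
    ∑ i ∈ Finset.range ℓ, if 1 ≤ i then ent v (2 * i) * ent v (2 * i + 1) else 0

section Aux
variable {F : Type} [Field F] [Fintype F]

lemma two_eq_zero' (hF : Fintype.card F = 4) : (2 : F) = 0 := by
  have h4 : ((4 : ℕ) : F) = 0 := by
    have := FiniteField.cast_card_eq_zero F
    rwa [hF] at this
  have h : (2 : F) * 2 = 0 := by push_cast at h4; linear_combination h4
  rcases mul_eq_zero.mp h with h | h <;> exact h

lemma add_self' (hF : Fintype.card F = 4) (x : F) : x + x = 0 := by
  have h := two_eq_zero' hF
  linear_combination x * h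

lemma pow4' (hF : Fintype.card F = 4) (x : F) : x ^ 4 = x := by
  have := FiniteField.pow_card x
  rwa [hF] at this

noncomputable def eps (F : Type) [Field F] (z : F) : ℂ :=
  if z + z ^ 2 = 0 then 1 else -1

lemma tr_idem (hF : Fintype.card F = 4) (a : F) : a + a ^ 2 = 0 ∨ a + a ^ 2 = 1 := by
  set t := a + a ^ 2 with ht
  have hsq : t ^ 2 = t := by
    have h2 := two_eq_zero' hF
    have h4 := pow4' hF a
    rw [ht]
    linear_combination h4 + a ^ 3 * h2
  have : t * (t - 1) = 0 := by rw [mul_sub, mul_one, ← sq, hsq, sub_self]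
  rcases mul_eq_zero.mp this with h | h
  · exact Or.inl h
  · exact Or.inr (by linear_combination h)

lemma eps_add (hF : Fintype.card F = 4) (a b : F) :
    eps F (a + b) = eps F a * eps F b := by
  have key : (a + b) + (a + b) ^ 2 = (a + a ^ 2) + (b + b ^ 2) := by
    linear_combination (a * b) * two_eq_zero' hF
  have h2 := two_eq_zero' hF
  have h11 : (1 : F) + 1 = 0 := by linear_combination h2
  unfold eps
  rw [key]
  rcases tr_idem hF a with ha | ha <;> rcases tr_idem hF b with hb | hb <;>
    simp [ha, hb, h11]

lemma eps_zero : eps F 0 = 1 := by simp [eps]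

lemma eps_sq (hF : Fintype.card F = 4) (a : F) : eps F (a ^ 2) = eps F a := by
  unfold eps
  have : a ^ 2 + (a ^ 2) ^ 2 = a + a ^ 2 := by
    linear_combination pow4' hF a
  rw [this]

lemma eps_sq_one (z : F) : (eps F z) ^ 2 = 1 := by
  unfold eps; split <;> norm_num

lemma eps_sum (hF : Fintype.card F = 4) {ι : Type*} (s : Finset ι) (f : ι → F) :
    eps F (∑ j ∈ s, f j) = ∏ j ∈ s, eps F (f j) := by
  classical
  induction s using Finset.cons_induction with
  | empty => simpa using eps_zero
  | cons a s ha ih => rw [Finset.sum_cons, Finset.prod_cons, eps_add hF, ih]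

lemma sum_eps_zero (hF : Fintype.card F = 4) : ∑ z : F, eps F z = 0 := by
  have h2 := two_eq_zero' hF
  have hset : ∀ z : F, z + z ^ 2 = 0 ↔ (z = 0 ∨ z = 1) := by
    intro z
    constructor
    · intro h
      have hz : z * (1 + z) = 0 := by linear_combination h
      rcases mul_eq_zero.mp hz with h' | h'
      · exact Or.inl h'
      · exact Or.inr (by linear_combination h' - h2)
    · rintro (rfl | rfl)
      · ring
      · linear_combination h2
  have hA : ({0, 1} : Finset F).card = 2 := by
    rw [Finset.card_insert_of_notMem (by simp), Finset.card_singleton]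
  have hmem : ∀ z : F, z ∈ ({0, 1} : Finset F) ↔ z + z ^ 2 = 0 := by
    intro z; rw [hset]; simp
  calc ∑ z : F, eps F z
      = ∑ z ∈ ({0, 1} : Finset F), eps F z + ∑ z ∈ ({0, 1} : Finset F)ᶜ, eps F z :=
        (Finset.sum_add_sum_compl _ _).symm
    _ = ∑ z ∈ ({0, 1} : Finset F), (1 : ℂ) + ∑ z ∈ ({0, 1} : Finset F)ᶜ, (-1 : ℂ) := by
        congr 1
        · exact Finset.sum_congr rfl fun z hz => if_pos ((hmem z).mp hz)
        · refine Finset.sum_congr rfl fun z hz => if_neg ?_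
          rw [Finset.mem_compl] at hz
          exact fun h => hz ((hmem z).mpr h)
    _ = 0 := by
        rw [Finset.sum_const, Finset.sum_const, Finset.card_compl, hA, hF]
        norm_num

lemma sum_eps_linear (hF : Fintype.card F = 4) (a : F) :
    ∑ t : F, eps F (a * t) = if a = 0 then (4 : ℂ) else 0 := by
  split
  · next h =>
      subst h
      simp only [zero_mul]
      rw [Finset.sum_const, Finset.card_univ, hF, eps_zero]
      norm_num
  · next h =>
      have hbij : Function.Bijective (fun t : F => a * t) :=
        (Finite.injective_iff_bijective).mp (mul_right_injective₀ h)
      calc ∑ t : F, eps F (a * t) = ∑ z : F, eps F z :=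
            Fintype.sum_bijective _ hbij _ _ fun t => rfl
        _ = 0 := sum_eps_zero hF

lemma pair_sum (hF : Fintype.card F = 4) {b : F} (hb : b ≠ 0) (c d : F) :
    ∃ σ : ℂ, (σ = 1 ∨ σ = -1) ∧
      ∑ q : F × F, eps F (b * q.1 * q.2 + c * q.1 + d * q.2) = 4 * σ := by
  refine ⟨eps F (c * (b⁻¹ * d)), ?_, ?_⟩
  · unfold eps; split
    · exact Or.inl rfl
    · exact Or.inr rfl
  have hnd : -d = d := neg_eq_of_add_eq_zero_left (add_self' hF d)
  rw [Fintype.sum_prod_type]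
  have step : ∀ s : F, ∑ t : F, eps F (b * s * t + c * s + d * t)
      = eps F (c * s) * (if b * s + d = 0 then (4 : ℂ) else 0) := by
    intro s
    calc ∑ t : F, eps F (b * s * t + c * s + d * t)
        = ∑ t : F, eps F (c * s) * eps F ((b * s + d) * t) := by
          refine Finset.sum_congr rfl fun t _ => ?_
          rw [← eps_add hF]; congr 1; ring
      _ = eps F (c * s) * ∑ t : F, eps F ((b * s + d) * t) := by rw [Finset.mul_sum]
      _ = _ := by rw [sum_eps_linear hF]
  rw [Finset.sum_congr rfl fun s _ => step s]
  have hcond : ∀ s : F, (b * s + d = 0) ↔ s = b⁻¹ * d := by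
    intro s
    constructor
    · intro h
      have hbs : b * s = d := by
        have : b * s = -d := by linear_combination h
        rwa [hnd] at this
      rw [← hbs, inv_mul_cancel_left₀ hb]
    · rintro rfl
      rw [mul_inv_cancel_left₀ hb]
      exact add_self' hF d
  calc ∑ s : F, eps F (c * s) * (if b * s + d = 0 then (4 : ℂ) else 0)
      = ∑ s : F, (if s = b⁻¹ * d then eps F (c * s) * 4 else 0) := by
        refine Finset.sum_congr rfl fun s _ => ?_
        simp only [hcond s]
        split <;> simp
    _ = eps F (c * (b⁻¹ * d)) * 4 := by
        rw [Finset.sum_ite_eq' Finset.univ]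
        simp
    _ = 4 * eps F (c * (b⁻¹ * d)) := by ring

lemma sum_range_two_mul {M : Type*} [AddCommMonoid M] (f : ℕ → M) (m : ℕ) :
    ∑ k ∈ Finset.range (2 * m), f k = ∑ j ∈ Finset.range m, (f (2 * j) + f (2 * j + 1)) := by
  induction m with
  | zero => simp
  | succ n ih =>
      rw [show 2 * (n + 1) = 2 * n + 1 + 1 by ring, Finset.sum_range_succ,
        Finset.sum_range_succ, Finset.sum_range_succ, ih, add_assoc]

end Aux


section Maps
variable {F : Type} [Field F] {m : ℕ}

lemma ent_lt {G : Type} [Zero G] {n : ℕ} (v : Fin n → G) {k : ℕ} (h : k < n) :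
    ent v k = v ⟨k, h⟩ := dif_pos h

/-- `S(p) = Σ s_j t_j` for a tuple of pairs. -/
def Sq (p : Fin m → F × F) : F :=
  ∑ j ∈ Finset.range m, (ent p j).1 * (ent p j).2

/-- The coordinates of the lifted vector, as a total function on `ℕ`. -/
def Gf (p : Fin m → F × F) (k : ℕ) : F :=
  if k = 0 then 0
  else if k = 1 then (1 + Sq p) ^ 2
  else if k % 2 = 0 then (ent p ((k - 2) / 2)).1 else (ent p ((k - 2) / 2)).2

def gmap (p : Fin m → F × F) : Fin (2 * (m + 1)) → F := fun k => Gf p k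

def emap (v : Fin (2 * (m + 1)) → F) : Fin m → F × F :=
  fun j => (ent v (2 * (j : ℕ) + 2), ent v (2 * (j : ℕ) + 3))

lemma Gf_zero (p : Fin m → F × F) : Gf p 0 = 0 := by
  unfold Gf; rw [if_pos rfl]

lemma Gf_one (p : Fin m → F × F) : Gf p 1 = (1 + Sq p) ^ 2 := by
  unfold Gf; rw [if_neg (by omega), if_pos rfl]

lemma Gf_even (p : Fin m → F × F) (j : ℕ) : Gf p (2 * j + 2) = (ent p j).1 := by
  unfold Gf
  rw [if_neg (by omega), if_neg (by omega), if_pos (by omega),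
    show (2 * j + 2 - 2) / 2 = j by omega]

lemma Gf_odd (p : Fin m → F × F) (j : ℕ) : Gf p (2 * j + 3) = (ent p j).2 := by
  unfold Gf
  rw [if_neg (by omega), if_neg (by omega), if_neg (by omega),
    show (2 * j + 3 - 2) / 2 = j by omega]

lemma ent_gmap (p : Fin m → F × F) (k : ℕ) (h : k < 2 * (m + 1)) :
    ent (gmap p) k = Gf p k := by
  rw [ent, dif_pos h]; rfl

lemma Qsum (v : Fin (2 * (m + 1)) → F) :
    (∑ i ∈ Finset.range (m + 1), if 1 ≤ i then ent v (2 * i) * ent v (2 * i + 1) else 0)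
      = ∑ j ∈ Finset.range m, ent v (2 * j + 2) * ent v (2 * j + 3) := by
  rw [Finset.sum_range_succ']
  rw [if_neg (by omega : ¬ 1 ≤ 0), add_zero]
  refine Finset.sum_congr rfl fun j _ => ?_
  rw [if_pos (by omega), show 2 * (j + 1) = 2 * j + 2 by ring,
    show 2 * j + 2 + 1 = 2 * j + 3 by ring]

lemma Sq_emap (v : Fin (2 * (m + 1)) → F) :
    Sq (emap v) = ∑ j ∈ Finset.range m, ent v (2 * j + 2) * ent v (2 * j + 3) := by
  unfold Sq
  refine Finset.sum_congr rfl fun j hj => ?_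
  rw [Finset.mem_range] at hj
  rw [ent_lt _ hj]
  rfl

lemma Qell_eq (α : F) (v : Fin (2 * (m + 1)) → F) (h0 : ent v 0 = 0) :
    Qell α (m + 1) v = (ent v 1) ^ 2 + Sq (emap v) := by
  unfold Qell
  rw [h0, Qsum, Sq_emap]
  ring

lemma emap_gmap (p : Fin m → F × F) : emap (gmap p) = p := by
  funext j
  have h1 : 2 * (j : ℕ) + 2 < 2 * (m + 1) := by have := j.2; omega
  have h2 : 2 * (j : ℕ) + 3 < 2 * (m + 1) := by have := j.2; omega
  show (ent (gmap p) (2 * (j : ℕ) + 2), ent (gmap p) (2 * (j : ℕ) + 3)) = p j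
  rw [ent_gmap p _ h1, ent_gmap p _ h2, Gf_even, Gf_odd, ent_lt p j.2]

lemma Gf_emap_ge2 (v : Fin (2 * (m + 1)) → F) (k : ℕ) (h2 : 2 ≤ k) :
    Gf (emap v) k = ent v k := by
  unfold Gf
  rw [if_neg (by omega), if_neg (by omega)]
  rcases Nat.even_or_odd k with he | ho
  · have hk2 := Nat.even_iff.mp he
    rw [if_pos hk2]
    by_cases hj : (k - 2) / 2 < m
    · rw [ent_lt _ hj]
      show ent v (2 * ((k - 2) / 2) + 2) = ent v k
      congr 1
      omega
    · -- out of range: both sides are 0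
      rw [ent, dif_neg hj]
      rw [ent, dif_neg (by omega : ¬ k < 2 * (m + 1))]
      rfl
  · have hk2 := Nat.odd_iff.mp ho
    rw [if_neg (by omega)]
    by_cases hj : (k - 2) / 2 < m
    · rw [ent_lt _ hj]
      show ent v (2 * ((k - 2) / 2) + 3) = ent v k
      congr 1
      omega
    · rw [ent, dif_neg hj]
      rw [ent, dif_neg (by omega : ¬ k < 2 * (m + 1))]
      rfl

end Maps


section Lift
variable {F : Type} [Field F] [Fintype F] {m : ℕ}

lemma Qell_gmap (hF : Fintype.card F = 4) (α : F) (p : Fin m → F × F) :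
    Qell α (m + 1) (gmap p) = 1 := by
  have h0 : ent (gmap p) 0 = 0 := by rw [ent_gmap p 0 (by omega), Gf_zero]
  rw [Qell_eq α _ h0, emap_gmap, ent_gmap p 1 (by omega), Gf_one]
  have h4 := pow4' hF (1 + Sq p)
  have hss := add_self' hF (Sq p)
  linear_combination h4 + hss

lemma gmap_emap (hF : Fintype.card F = 4) (α : F) (v : Fin (2 * (m + 1)) → F)
    (hQ : Qell α (m + 1) v = 1) (h0 : ent v 0 = 0) : gmap (emap v) = v := by
  have hS : (ent v 1) ^ 2 + Sq (emap v) = 1 := by rw [← Qell_eq α v h0]; exact hQ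
  have h1 : ent v 1 = (1 + Sq (emap v)) ^ 2 := by
    have hsq : (1 + Sq (emap v)) = (ent v 1) ^ 2 := by
      linear_combination -hS + add_self' hF (Sq (emap v))
    calc ent v 1 = ((ent v 1) ^ 2) ^ 2 := by
          rw [← pow_mul]; exact (pow4' hF _).symm
      _ = (1 + Sq (emap v)) ^ 2 := by rw [← hsq]
  funext k
  have hvk : ent v (↑k : ℕ) = v k := dif_pos k.2
  show Gf (emap v) ↑k = v k
  rw [← hvk]
  rcases Nat.lt_or_ge (↑k : ℕ) 2 with h2 | h2
  · have : (↑k : ℕ) = 0 ∨ (↑k : ℕ) = 1 := by omega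
    rcases this with h | h <;> rw [h]
    · rw [Gf_zero, h0]
    · rw [Gf_one, h1]
  · exact Gf_emap_ge2 v _ h2

lemma lin_sum {m : ℕ} (w : Fin (2 * (m + 1)) → F) (p : Fin m → F × F) :
    ∑ i, w i * gmap p i
      = ent w 1 * (1 + Sq p) ^ 2
        + ∑ j ∈ Finset.range m,
            (ent w (2 * j + 2) * (ent p j).1 + ent w (2 * j + 3) * (ent p j).2) := by
  have hstep : ∀ i : Fin (2 * (m + 1)), w i * gmap p i = ent w ↑i * Gf p ↑i := by
    intro i
    rw [show ent w (↑i : ℕ) = w i from dif_pos i.2]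
    rfl
  rw [Finset.sum_congr rfl fun i _ => hstep i,
    Fin.sum_univ_eq_sum_range (fun k => ent w k * Gf p k) (2 * (m + 1)),
    show Finset.range (2 * (m + 1)) = Finset.range (2 * m + 1 + 1) from congrArg _ (by ring),
    Finset.sum_range_succ', Finset.sum_range_succ',
    sum_range_two_mul (fun i => ent w (i + 1 + 1) * Gf p (i + 1 + 1)) m]
  rw [Gf_zero, Gf_one]
  have hterm : ∀ j ∈ Finset.range m,
      (ent w (2 * j + 1 + 1) * Gf p (2 * j + 1 + 1)
        + ent w (2 * j + 1 + 1 + 1) * Gf p (2 * j + 1 + 1 + 1))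
      = ent w (2 * j + 2) * (ent p j).1 + ent w (2 * j + 3) * (ent p j).2 := by
    intro j _
    rw [show 2 * j + 1 + 1 = 2 * j + 2 by ring, show 2 * j + 2 + 1 = 2 * j + 3 by ring,
      Gf_even, Gf_odd]
  rw [Finset.sum_congr rfl hterm]
  ring

end Lift


/-- for `O₀ = {v ∈ D₁ : v₁ = 0}` and any additive character
`χ_w(x) = (-1)^{tr(w₁x₁ + ⋯ + w_{2ℓ}x_{2ℓ})}` of `F₄^{2ℓ}` with `w₂ ≠ 0`
(`tr(y) = y + y²` is the trace of `F₄` over `F₂`, and `(-1)^{tr(z)}` is `1` if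
`tr(z) = 0` and `-1` otherwise), the character sum `χ(O₀)` equals `±4^{ℓ-1}`. -/
theorem character_sum_over_O₀
    (F : Type) [Field F] [Fintype F] (hF : Fintype.card F = 4)
    (α : F) (hα : α ^ 2 = α + 1) (ℓ : ℕ) (hℓ : 2 ≤ ℓ)
    (w : Fin (2 * ℓ) → F) (hw : w ⟨1, by omega⟩ ≠ 0) :
    let O₀ : Set (Fin (2 * ℓ) → F) := {v | Qell α ℓ v = 1 ∧ v ⟨0, by omega⟩ = 0}
    let χ : (Fin (2 * ℓ) → F) → ℂ := fun x =>
      if (∑ i, w i * x i) + (∑ i, w i * x i) ^ 2 = 0 then 1 else -1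
    (∑ v ∈ O₀.toFinset, χ v) = (4 : ℂ) ^ (ℓ - 1) ∨
      (∑ v ∈ O₀.toFinset, χ v) = -(4 : ℂ) ^ (ℓ - 1) := by
  obtain ⟨m, rfl⟩ : ∃ m, ℓ = m + 1 := ⟨ℓ - 1, by omega⟩
  intro O₀ χ
  have hχ : ∀ x, χ x = eps F (∑ i, w i * x i) := fun x => rfl
  have hW1 : ent w 1 = w ⟨1, by omega⟩ := dif_pos (by omega)
  have hb : (ent w 1) ^ 2 ≠ 0 := pow_ne_zero 2 (by rw [hW1]; exact hw)
  -- per-pair character sums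
  choose σ hσ1 hσ2 using fun j : Fin m =>
    pair_sum hF hb (ent w (2 * (j : ℕ) + 2)) (ent w (2 * (j : ℕ) + 3))
  -- the value of χ on a lifted vector
  have hχg : ∀ p : Fin m → F × F, χ (gmap p)
      = eps F ((ent w 1) ^ 2) * ∏ j ∈ Finset.range m,
          eps F ((ent w 1) ^ 2 * (ent p j).1 * (ent p j).2
            + ent w (2 * j + 2) * (ent p j).1 + ent w (2 * j + 3) * (ent p j).2) := by
    intro p
    rw [hχ, lin_sum w p, eps_add hF]
    have hA : eps F (ent w 1 * (1 + Sq p) ^ 2)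
        = eps F ((ent w 1) ^ 2) * ∏ j ∈ Finset.range m,
            eps F ((ent w 1) ^ 2 * ((ent p j).1 * (ent p j).2)) := by
      have h1 : ent w 1 * (1 + Sq p) ^ 2 = ((ent w 1) ^ 2 * (1 + Sq p)) ^ 2 := by
        linear_combination (-(1 + Sq p) ^ 2) * pow4' hF (ent w 1)
      have h2 : (ent w 1) ^ 2 * (1 + Sq p)
          = (ent w 1) ^ 2 + ∑ j ∈ Finset.range m,
              (ent w 1) ^ 2 * ((ent p j).1 * (ent p j).2) := by
        rw [mul_add, mul_one, Sq, Finset.mul_sum]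
      rw [h1, eps_sq hF, h2, eps_add hF, eps_sum hF]
    rw [hA, eps_sum hF, mul_assoc, ← Finset.prod_mul_distrib]
    congr 1
    refine Finset.prod_congr rfl fun j _ => ?_
    rw [← eps_add hF]
    congr 1
    ring
  have key : (∑ v ∈ O₀.toFinset, χ v)
      = eps F ((ent w 1) ^ 2) * ((4 : ℂ) ^ m * ∏ j : Fin m, σ j) := by
    calc (∑ v ∈ O₀.toFinset, χ v) = ∑ p : Fin m → F × F, χ (gmap p) := by
          refine Finset.sum_nbij' emap gmap (fun _ _ => Finset.mem_univ _) ?_ ?_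
            (fun p _ => emap_gmap p) ?_
          · intro p _
            rw [Set.mem_toFinset]
            refine ⟨Qell_gmap hF α p, ?_⟩
            show Gf p 0 = 0
            exact Gf_zero p
          · intro v hv
            rw [Set.mem_toFinset] at hv
            exact gmap_emap hF α v hv.1 (by rw [show ent v 0 = v ⟨0, by omega⟩ from dif_pos (by omega)]; exact hv.2)
          · intro v hv
            rw [Set.mem_toFinset] at hv
            rw [gmap_emap hF α v hv.1 (by rw [show ent v 0 = v ⟨0, by omega⟩ from dif_pos (by omega)]; exact hv.2)]
      _ = ∑ p : Fin m → F × F, eps F ((ent w 1) ^ 2) * ∏ j : Fin m,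
            eps F ((ent w 1) ^ 2 * (p j).1 * (p j).2
              + ent w (2 * (j : ℕ) + 2) * (p j).1 + ent w (2 * (j : ℕ) + 3) * (p j).2) := by
          refine Finset.sum_congr rfl fun p _ => ?_
          rw [hχg p]
          congr 1
          rw [← Fin.prod_univ_eq_prod_range (fun j =>
            eps F ((ent w 1) ^ 2 * (ent p j).1 * (ent p j).2
              + ent w (2 * j + 2) * (ent p j).1 + ent w (2 * j + 3) * (ent p j).2)) m]
          refine Finset.prod_congr rfl fun j _ => ?_
          rw [show ent p (↑j : ℕ) = p j from dif_pos j.2]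
      _ = eps F ((ent w 1) ^ 2) * ∑ p : Fin m → F × F, ∏ j : Fin m,
            (fun (j : Fin m) (q : F × F) =>
              eps F ((ent w 1) ^ 2 * q.1 * q.2
                + ent w (2 * (j : ℕ) + 2) * q.1 + ent w (2 * (j : ℕ) + 3) * q.2)) j (p j) := by
          rw [← Finset.mul_sum]
      _ = eps F ((ent w 1) ^ 2) * ∏ j : Fin m, ∑ q : F × F,
            eps F ((ent w 1) ^ 2 * q.1 * q.2
              + ent w (2 * (j : ℕ) + 2) * q.1 + ent w (2 * (j : ℕ) + 3) * q.2) := by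
          rw [Fintype.prod_sum]
      _ = eps F ((ent w 1) ^ 2) * ∏ j : Fin m, (4 * σ j) := by
          rw [Finset.prod_congr rfl fun j _ => hσ2 j]
      _ = eps F ((ent w 1) ^ 2) * ((4 : ℂ) ^ m * ∏ j : Fin m, σ j) := by
          rw [Finset.prod_mul_distrib, Finset.prod_const, Finset.card_univ, Fintype.card_fin]
  set τ : ℂ := eps F ((ent w 1) ^ 2) * ∏ j : Fin m, σ j with hτdef
  have hτ2 : τ ^ 2 = 1 := by
    rw [hτdef, mul_pow, eps_sq_one, one_mul, ← Finset.prod_pow]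
    refine Finset.prod_eq_one fun j _ => ?_
    rcases hσ1 j with h | h <;> rw [h] <;> norm_num
  have hτ : τ = 1 ∨ τ = -1 := by
    rcases mul_eq_zero.mp (show (τ - 1) * (τ + 1) = 0 by linear_combination hτ2) with h | h
    · exact Or.inl (by linear_combination h)
    · exact Or.inr (by linear_combination h)
  have hfin : (∑ v ∈ O₀.toFinset, χ v) = (4 : ℂ) ^ m * τ := by
    rw [key, hτdef]; ring
  rw [show m + 1 - 1 = m from rfl]
  rcases hτ with h | h
  · exact Or.inl (by rw [hfin, h, mul_one])
  · exact Or.inr (by rw [hfin, h]; ring)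
end

section
/- Let q be a prime power, g a primitive element of F_{q^2}, and Q: F_{q^2}^{2ℓ} → F_{q^2} a nonsingular elliptic quadratic form. For 0 ≤ i ≤ q, let Ω_{g^i} = {x ≠ 0 : tr_{q^2/q}(g^i Q(x)) = 0}, and let Ω₀ = {x ≠ 0 : Q(x) = 0}. Then Ω₀ ⊆ Ω_{g^i} for every i, and the q+2 sets Ω₀ and Ω_{g^i} ∖ Ω₀ (0 ≤ i ≤ q) partition F_{q^2}^{2ℓ} ∖ {0}. -/
/-- `Q` is a nonsingular elliptic (minus-type) quadratic form on `F^{2ℓ}`. -/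
def IsEllipticForm {F : Type} [Field F] (ℓ : ℕ) (Q : (Fin (2 * ℓ) → F) → F) : Prop :=
  ∃ (a b c : F) (e : (Fin (2 * ℓ) → F) ≃ₗ[F] (Fin (2 * ℓ) → F)),
    (∀ x y : F, a * x ^ 2 + b * x * y + c * y ^ 2 = 0 → x = 0 ∧ y = 0) ∧
    ∀ v, Q v = a * ent (e v) 0 ^ 2 + b * ent (e v) 0 * ent (e v) 1 + c * ent (e v) 1 ^ 2 +
        ∑ i ∈ Finset.range ℓ, if 1 ≤ i then ent (e v) (2 * i) * ent (e v) (2 * i + 1) else 0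

/-!
Write `N = q² - 1 = (q - 1)(q + 1)`, so that `g` is a primitive `N`-th root of unity and
`ω = g^(q-1)` a primitive `(q + 1)`-th one. For `y ≠ 0`, `y + y^q = 0` means `y^(q-1) = -1`,
and `(gⁱβ)^(q-1) = ωⁱ β^(q-1)`; so `i` must solve `ωⁱ = x` with `x = -1 / β^(q-1)`. Since
`β^N = 1` and `(-1)^(q+1) = 1` (for even `q` the characteristic is `2`), `x^(q+1) = 1`, and
`x` is then `ωⁱ` for exactly one `0 ≤ i ≤ q`.
-/

theorem add_pow_eq_zero_iff_pow_sub_one_eq_neg_one {K : Type*} [DivisionRing K] {y : K}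
    (hy : y ≠ 0) {q : ℕ} (hq : q ≠ 0) : y + y ^ q = 0 ↔ y ^ (q - 1) = -1 := by
  rw [← pow_sub_one_mul hq, ← one_add_mul, mul_eq_zero, or_iff_left hy, add_comm,
    add_eq_zero_iff_eq_neg]

theorem IsPrimitiveRoot.existsUnique_fin_pow_eq {R : Type*} [CommRing R] [IsDomain R]
    {ω x : R} {n : ℕ} [NeZero n] (hω : IsPrimitiveRoot ω n) (hx : x ^ n = 1) :
    ∃! i : Fin n, ω ^ (i : ℕ) = x := by
  obtain ⟨i, hi, rfl⟩ := hω.eq_pow_of_pow_eq_one hx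
  exact ⟨⟨i, hi⟩, rfl, fun j hj => Fin.ext (hω.pow_inj j.isLt hi hj)⟩

section FiniteField

variable {F : Type*} [Field F] [Fintype F]

theorem ne_zero_of_forall_ne_zero_eq_pow (hF : 2 < Fintype.card F) {g : F}
    (hg : ∀ x : F, x ≠ 0 → ∃ k : ℕ, g ^ k = x) : g ≠ 0 := by
  classical
  obtain ⟨u, hu⟩ := Fintype.exists_ne_of_one_lt_card (by rw [Fintype.card_units]; omega) (1 : Fˣ)
  obtain ⟨k, hk⟩ := hg u u.ne_zero
  rintro rfl
  rcases k with _ | k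
  · exact hu (Units.val_eq_one.mp (hk.symm.trans (pow_zero 0)))
  · exact u.ne_zero (hk.symm.trans (zero_pow k.succ_ne_zero))

theorem isPrimitiveRoot_of_forall_ne_zero_eq_pow (hF : 2 < Fintype.card F) {g : F}
    (hg : ∀ x : F, x ≠ 0 → ∃ k : ℕ, g ^ k = x) : IsPrimitiveRoot g (Fintype.card F - 1) := by
  classical
  set u := Units.mk0 g (ne_zero_of_forall_ne_zero_eq_pow hF hg)
  have hgen : ∀ v : Fˣ, v ∈ Subgroup.zpowers u := fun v => by
    obtain ⟨k, hk⟩ := hg v v.ne_zero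
    exact ⟨k, Units.ext (by simpa [u] using hk)⟩
  have hu := IsPrimitiveRoot.orderOf u
  rw [orderOf_eq_card_of_forall_mem_zpowers hgen, Nat.card_eq_fintype_card,
    Fintype.card_units] at hu
  exact IsPrimitiveRoot.coe_units_iff.mpr hu

theorem neg_one_pow_add_one_eq_one {q : ℕ} (hF : Fintype.card F = q ^ 2) :
    (-1 : F) ^ (q + 1) = 1 := by
  rcases Nat.even_or_odd q with hq | hq
  · have hchar : ringChar F = 2 := by
      rw [FiniteField.even_card_iff_char_two, hF, ← Nat.even_iff]
      exact Nat.even_pow.mpr ⟨hq, two_ne_zero⟩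
    rw [neg_one_eq_one_iff.mpr hchar, one_pow]
  · exact hq.add_one.neg_one_pow

theorem existsUnique_fin_pow_mul_add_pow_eq_zero {q : ℕ} (hF : Fintype.card F = q ^ 2) {g : F}
    (hg : ∀ x : F, x ≠ 0 → ∃ k : ℕ, g ^ k = x) {β : F} (hβ : β ≠ 0) :
    ∃! i : Fin (q + 1), g ^ (i : ℕ) * β + (g ^ (i : ℕ) * β) ^ q = 0 := by
  have hq : 1 < q := by
    have := Fintype.one_lt_card (α := F)
    rw [hF] at this
    exact (Nat.one_lt_pow_iff two_ne_zero).mp this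
  have hcard : Fintype.card F - 1 = (q - 1) * (q + 1) := by
    rw [hF, mul_comm, ← Nat.sq_sub_sq, one_pow]
  have hN : 0 < Fintype.card F - 1 := Nat.sub_pos_of_lt Fintype.one_lt_card
  have hg' := isPrimitiveRoot_of_forall_ne_zero_eq_pow (by rw [hF]; nlinarith) hg
  have hω : IsPrimitiveRoot (g ^ (q - 1)) (q + 1) := hg'.pow hN hcard
  have hβq : β ^ (q - 1) ≠ 0 := pow_ne_zero _ hβ
  have hx : (-1 / β ^ (q - 1)) ^ (q + 1) = 1 := by
    rw [div_pow, neg_one_pow_add_one_eq_one hF, ← pow_mul, ← hcard,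
      FiniteField.pow_card_sub_one_eq_one β hβ, div_one]
  have hcond : ∀ i : Fin (q + 1), g ^ (i : ℕ) * β + (g ^ (i : ℕ) * β) ^ q = 0 ↔
      (g ^ (q - 1)) ^ (i : ℕ) = -1 / β ^ (q - 1) := fun i => by
    rw [add_pow_eq_zero_iff_pow_sub_one_eq_neg_one
        (mul_ne_zero (pow_ne_zero _ (hg'.ne_zero hN.ne')) hβ) (by omega),
      eq_div_iff hβq, mul_pow, pow_right_comm]
  exact (existsUnique_congr hcond).mpr (hω.existsUnique_fin_pow_eq hx)

end FiniteField

theorem rotated_quadrics_partition_general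
    (q : ℕ)
    (F : Type) [Field F] [Fintype F] (hF : Fintype.card F = q ^ 2)
    (g : F) (hg : ∀ x : F, x ≠ 0 → ∃ k : ℕ, g ^ k = x)
    (ℓ : ℕ) (Q : (Fin (2 * ℓ) → F) → F) :
    let V := Fin (2 * ℓ) → F
    let Ω₀ : Set V := {x | x ≠ 0 ∧ Q x = 0}
    let Ωg : Fin (q + 1) → Set V :=
      fun i => {x | x ≠ 0 ∧ g ^ (i : ℕ) * Q x + (g ^ (i : ℕ) * Q x) ^ q = 0}
    (∀ i : Fin (q + 1), Ω₀ ⊆ Ωg i) ∧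
    (∀ i : Fin (q + 1), Disjoint Ω₀ (Ωg i \ Ω₀)) ∧
    (∀ i j : Fin (q + 1), i ≠ j → Disjoint (Ωg i \ Ω₀) (Ωg j \ Ω₀)) ∧
    (Ω₀ ∪ ⋃ i : Fin (q + 1), (Ωg i \ Ω₀)) = {x : V | x ≠ 0} := by
  intro V Ω₀ Ωg
  have hq : q ≠ 0 := by
    rintro rfl
    simp at hF
  refine ⟨fun i x hx => ⟨hx.1, by simp [hx.2, hq]⟩, fun i => Set.disjoint_sdiff_right, ?_, ?_⟩
  · intro i j hij
    refine Set.disjoint_left.mpr fun x ⟨⟨hx0, hxi⟩, hxn⟩ ⟨⟨_, hxj⟩, _⟩ => hij ?_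
    exact (existsUnique_fin_pow_mul_add_pow_eq_zero hF hg fun h => hxn ⟨hx0, h⟩).unique hxi hxj
  · refine Set.Subset.antisymm (Set.union_subset (fun x hx => hx.1) ?_) fun x hx0 => ?_
    · exact Set.iUnion_subset fun i x hx => hx.1.1
    by_cases hQx : Q x = 0
    · exact Or.inl ⟨hx0, hQx⟩
    obtain ⟨i, hi, -⟩ := existsUnique_fin_pow_mul_add_pow_eq_zero hF hg hQx
    exact Or.inr (Set.mem_iUnion.mpr ⟨i, ⟨hx0, hi⟩, fun h => hQx h.2⟩)

/-- let `F = F_{q²}`, `g` a primitive element of `F`, `Q` a nonsingular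
elliptic quadratic form on `F^{2ℓ}`, `Ω_{g^i} = {x ≠ 0 : tr_{q²/q}(gⁱ Q(x)) = 0}` for
`0 ≤ i ≤ q` (with `tr_{q²/q}(y) = y + y^q`) and `Ω₀ = {x ≠ 0 : Q(x) = 0}`.  Then
`Ω₀ ⊆ Ω_{g^i}` for every `i`, and the `q+2` sets `Ω₀`, `Ω_{g^i} ∖ Ω₀` (`0 ≤ i ≤ q`)
partition `F^{2ℓ} ∖ {0}`. -/
theorem rotated_quadrics_partition
    (p s q : ℕ) (hp : p.Prime) (hs : 1 ≤ s) (hq : q = p ^ s)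
    (F : Type) [Field F] [Fintype F] (hF : Fintype.card F = q ^ 2)
    (g : F) (hg : ∀ x : F, x ≠ 0 → ∃ k : ℕ, g ^ k = x)
    (ℓ : ℕ) (hℓ : 1 ≤ ℓ) (Q : (Fin (2 * ℓ) → F) → F) (hQ : IsEllipticForm ℓ Q) :
    let V := Fin (2 * ℓ) → F
    let Ω₀ : Set V := {x | x ≠ 0 ∧ Q x = 0}
    let Ωg : Fin (q + 1) → Set V :=
      fun i => {x | x ≠ 0 ∧ g ^ (i : ℕ) * Q x + (g ^ (i : ℕ) * Q x) ^ q = 0}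
    (∀ i : Fin (q + 1), Ω₀ ⊆ Ωg i) ∧
    (∀ i : Fin (q + 1), Disjoint Ω₀ (Ωg i \ Ω₀)) ∧
    (∀ i j : Fin (q + 1), i ≠ j → Disjoint (Ωg i \ Ω₀) (Ωg j \ Ω₀)) ∧
    (Ω₀ ∪ ⋃ i : Fin (q + 1), (Ωg i \ Ω₀)) = {x : V | x ≠ 0} :=
  rotated_quadrics_partition_general q F hF g hg ℓ Q
end
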